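/- arXiv:1109.3318 — 3 statements merged into one kernel-verified Lean document; each statement's English description precedes it below -/
import Mathlib

section
/- Consider a sequence X(t) of matrices satisfying ‖X(t+1)‖ ≤ (1 + K₁ a(t))‖X(t)‖ + a(t)η(t) for all t ≥ 1, where K₁ > 0 is a constant, a(t) ∈ [0,1] with Σ_t a(t)² < ∞, and the η(t) ≥ 0 are i.i.d. random variables with finite variance. Then there exist a positive constant K (independent of t) and an almost surely finite random variable M such that, for all t > 0, ‖X(t+1)‖ ≤ e^{K Σ_{s=1}^{t} a(s)} · (‖X(1)‖ + M) almost surely. -/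
/-!
With `A(t) = a(1) + ⋯ + a(t)` and `1 + K₁ a ≤ e^{K₁ a}`, the normalised norms
`e^{-K₁ A(t)} ‖X(t+1)‖` increase by at most `w(t) η(t)` per step, where `w(s) = a(s) e^{-K₁ A(s)}`.
The same inequality makes `K₁ w(t) ≤ e^{-K₁ A(t-1)} - e^{-K₁ A(t)}` telescope, so `∑ w ≤ 1 / K₁`.
As the `η(t)` share the law of `η(0) ∈ L²`, the series `∑ w(s) η(s)` has summable `L²` norms and
hence converges almost surely; its sum is `M`, and `K = K₁`.
-/

open MeasureTheory ProbabilityTheory Finset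

section Gain

open Real

theorem one_add_mul_exp_neg_add_le (u v : ℝ) : (1 + v) * exp (-(u + v)) ≤ exp (-u) := by
  calc (1 + v) * exp (-(u + v)) ≤ exp v * exp (-(u + v)) := by
        gcongr; linarith [add_one_le_exp v]
    _ = exp (-u) := by rw [← exp_add]; ring_nf

noncomputable def gainSum (a : ℕ → ℝ) (t : ℕ) : ℝ := ∑ s ∈ Icc 1 t, a s

noncomputable def gainWeight (K : ℝ) (a : ℕ → ℝ) (s : ℕ) : ℝ := a s * exp (-(K * gainSum a s))

variable {a : ℕ → ℝ} {K : ℝ}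

@[simp]
theorem gainSum_zero (a : ℕ → ℝ) : gainSum a 0 = 0 := by simp [gainSum]

theorem gainSum_succ (a : ℕ → ℝ) (t : ℕ) : gainSum a (t + 1) = gainSum a t + a (t + 1) :=
  sum_Icc_succ_top (Nat.le_add_left 1 t) a

theorem exp_neg_mul_gainSum_succ_le (K : ℝ) (a : ℕ → ℝ) (t : ℕ) :
    (1 + K * a (t + 1)) * exp (-(K * gainSum a (t + 1))) ≤ exp (-(K * gainSum a t)) := by
  simpa only [gainSum_succ, mul_add] using
    one_add_mul_exp_neg_add_le (K * gainSum a t) (K * a (t + 1))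

theorem mul_sum_gainWeight_le (K : ℝ) (a : ℕ → ℝ) (t : ℕ) :
    K * ∑ s ∈ Icc 1 t, gainWeight K a s ≤ 1 - exp (-(K * gainSum a t)) := by
  induction t with
  | zero => simp
  | succ t ih =>
    rw [sum_Icc_succ_top (Nat.le_add_left 1 t), mul_add, gainWeight]
    linarith [exp_neg_mul_gainSum_succ_le K a t]

theorem gainWeight_nonneg (ha : ∀ t, 0 ≤ a t) (s : ℕ) : 0 ≤ gainWeight K a s :=
  mul_nonneg (ha s) (exp_pos _).le

theorem summable_gainWeight (hK : 0 < K) (ha : ∀ t, 0 ≤ a t) : Summable (gainWeight K a) := by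
  rw [← summable_nat_add_iff 1]
  refine summable_of_sum_range_le (c := 1 / K) (fun s => gainWeight_nonneg ha _) fun t => ?_
  rw [range_eq_Ico, sum_Ico_add', zero_add, Ico_add_one_right_eq_Icc, le_div_iff₀' hK]
  linarith [mul_sum_gainWeight_le K a t, exp_pos (-(K * gainSum a t))]

theorem le_exp_mul_gainSum_mul {x b : ℕ → ℝ} (hx : ∀ t, 0 ≤ x t)
    (hrec : ∀ t, 1 ≤ t → x (t + 1) ≤ (1 + K * a t) * x t + a t * b t) (t : ℕ) :
    x (t + 1) ≤ exp (K * gainSum a t) * (x 1 + ∑ s ∈ Icc 1 t, gainWeight K a s * b s) := by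
  suffices h :
      exp (-(K * gainSum a t)) * x (t + 1) ≤ x 1 + ∑ s ∈ Icc 1 t, gainWeight K a s * b s by
    rwa [exp_neg, inv_mul_le_iff₀ (exp_pos _)] at h
  induction t with
  | zero => simp
  | succ t ih =>
    rw [sum_Icc_succ_top (Nat.le_add_left 1 t), gainWeight]
    calc exp (-(K * gainSum a (t + 1))) * x (t + 1 + 1)
        ≤ exp (-(K * gainSum a (t + 1)))
            * ((1 + K * a (t + 1)) * x (t + 1) + a (t + 1) * b (t + 1)) :=
          mul_le_mul_of_nonneg_left (hrec _ (Nat.le_add_left 1 t)) (exp_pos _).le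
      _ = (1 + K * a (t + 1)) * exp (-(K * gainSum a (t + 1))) * x (t + 1)
            + a (t + 1) * exp (-(K * gainSum a (t + 1))) * b (t + 1) := by ring
      _ ≤ exp (-(K * gainSum a t)) * x (t + 1)
            + a (t + 1) * exp (-(K * gainSum a (t + 1))) * b (t + 1) := by
          gcongr
          · exact hx _
          · exact exp_neg_mul_gainSum_succ_le K a t
      _ ≤ _ := by linarith

end Gain

theorem ae_summable_mul_of_identDistrib {ι Ω : Type*} [Countable ι] [MeasurableSpace Ω]
    {μ : Measure Ω} {p : ENNReal} (hp : 1 ≤ p) {c : ι → ℝ} (hc : Summable c)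
    {f : ι → Ω → ℝ} {g : Ω → ℝ} (hf : ∀ i, IdentDistrib (f i) g μ μ) (hg : MemLp g p μ) :
    ∀ᵐ ω ∂μ, Summable fun i => c i * f i ω := by
  have hnorm : ∑' i, eLpNorm (c i • f i) p μ ≠ ⊤ := by
    simp only [eLpNorm_const_smul, (hf _).eLpNorm_eq, ENNReal.tsum_mul_right]
    exact ENNReal.mul_ne_top (tsum_enorm_ne_top_iff_summable_norm.2 hc.abs) hg.eLpNorm_ne_top
  filter_upwards [summable_norm_of_tsum_eLpNorm_ne_top hp
    (fun i => (hf i).aestronglyMeasurable_fst.const_smul (c i)) hnorm] with ω hω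
  exact hω.of_norm

theorem stmt_12_general {Ω : Type*} [MeasureSpace Ω]
    {n m : ℕ} (K₁ : ℝ) (hK₁ : 0 < K₁)
    (a : ℕ → ℝ) (ha : ∀ t, a t ∈ Set.Icc (0 : ℝ) 1)
    (X : ℕ → Ω → EuclideanSpace ℝ (Fin n × Fin m))
    (η : ℕ → Ω → ℝ)
    (hηmeas : ∀ t, Measurable (η t))
    (hηpos : ∀ t ω, 0 ≤ η t ω)
    (hηident : ∀ t, Measure.map (η t) (ℙ : Measure Ω) = Measure.map (η 0) ℙ)
    (hηL2 : MemLp (η 0) 2 ℙ)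
    (hrec : ∀ t : ℕ, 1 ≤ t → ∀ ω,
      ‖X (t + 1) ω‖ ≤ (1 + K₁ * a t) * ‖X t ω‖ + a t * η t ω) :
    ∃ (K : ℝ), 0 < K ∧ ∃ M : Ω → ℝ,
      ∀ᵐ ω ∂(ℙ : Measure Ω), 0 ≤ M ω ∧
        ∀ t : ℕ, 0 < t →
          ‖X (t + 1) ω‖ ≤ Real.exp (K * ∑ s ∈ Finset.Icc 1 t, a s) * (‖X 1 ω‖ + M ω) := by
  have ha₀ : ∀ t, 0 ≤ a t := fun t => (ha t).1
  have hsummable : ∀ᵐ ω ∂(ℙ : Measure Ω), Summable fun s => gainWeight K₁ a s * η s ω :=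
    ae_summable_mul_of_identDistrib one_le_two (summable_gainWeight hK₁ ha₀)
      (fun t => ⟨(hηmeas t).aemeasurable, (hηmeas 0).aemeasurable, hηident t⟩) hηL2
  refine ⟨K₁, hK₁, fun ω => ∑' s, gainWeight K₁ a s * η s ω, ?_⟩
  filter_upwards [hsummable] with ω hω
  have hterm : ∀ s, 0 ≤ gainWeight K₁ a s * η s ω := fun s =>
    mul_nonneg (gainWeight_nonneg ha₀ s) (hηpos s ω)
  refine ⟨tsum_nonneg hterm, fun t _ => ?_⟩
  calc ‖X (t + 1) ω‖
      ≤ Real.exp (K₁ * gainSum a t) * (‖X 1 ω‖ + ∑ s ∈ Icc 1 t, gainWeight K₁ a s * η s ω) :=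
        le_exp_mul_gainSum_mul (x := fun t => ‖X t ω‖) (fun _ => norm_nonneg _)
          (fun s hs => hrec s hs ω) t
    _ ≤ Real.exp (K₁ * gainSum a t) * (‖X 1 ω‖ + ∑' s, gainWeight K₁ a s * η s ω) := by
        gcongr
        exact hω.sum_le_tsum _ fun s _ => hterm s

/-- **A priori growth bound (Lemma on the update equation).** Suppose the random matrices
`X(t)` satisfy `‖X(t+1)‖ ≤ (1 + K₁ a(t)) ‖X(t)‖ + a(t) η(t)` for all `t ≥ 1`, where
`K₁ > 0`, `a(t) ∈ [0,1]` with `∑ a(t)² < ∞`, and the `η(t) ≥ 0` are i.i.d. with finite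
variance.  Then there are a constant `K > 0` and an almost surely finite random variable
`M ≥ 0` such that almost surely, for all `t > 0`,
`‖X(t+1)‖ ≤ e^{K ∑_{s=1}^t a(s)} (‖X(1)‖ + M)`. -/
theorem stmt_12 {Ω : Type*} [MeasureSpace Ω] [IsProbabilityMeasure (ℙ : Measure Ω)]
    {n m : ℕ} (K₁ : ℝ) (hK₁ : 0 < K₁)
    (a : ℕ → ℝ) (ha : ∀ t, a t ∈ Set.Icc (0 : ℝ) 1)
    (ha2 : Summable fun t => a t ^ 2)
    (X : ℕ → Ω → EuclideanSpace ℝ (Fin n × Fin m))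
    (η : ℕ → Ω → ℝ)
    (hηmeas : ∀ t, Measurable (η t))
    (hηpos : ∀ t ω, 0 ≤ η t ω)
    (hηindep : iIndepFun η ℙ)
    (hηident : ∀ t, Measure.map (η t) (ℙ : Measure Ω) = Measure.map (η 0) ℙ)
    (hηL2 : MemLp (η 0) 2 ℙ)
    (hrec : ∀ t : ℕ, 1 ≤ t → ∀ ω,
      ‖X (t + 1) ω‖ ≤ (1 + K₁ * a t) * ‖X t ω‖ + a t * η t ω) :
    ∃ (K : ℝ), 0 < K ∧ ∃ M : Ω → ℝ,
      ∀ᵐ ω ∂(ℙ : Measure Ω), 0 ≤ M ω ∧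
        ∀ t : ℕ, 0 < t →
          ‖X (t + 1) ω‖ ≤ Real.exp (K * ∑ s ∈ Finset.Icc 1 t, a s) * (‖X 1 ω‖ + M ω) :=
  stmt_12_general K₁ hK₁ a ha X η hηmeas hηpos hηident hηL2 hrec
end

section
/- Let λ ∈ (0,1], let b(t) ∈ [0,1] be a sequence with Σ_t b(t) = ∞, and let ε(t) be a real sequence with lim_{t→∞} ε(t) = 0. Then the sequence z(t) defined by the recursion z(t+1) = (1 − λ b(t))·z(t) + b(t)·ε(t+1) converges to 0 as t → ∞. -/
open Filter Finset

/-!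
Once `|ε| ≤ λη` from time `T` on, the excess `|z t| - η` is contracted by the factor
`1 - λ b t ∈ [0, 1]` at every step, so it is at most `∏_{T ≤ i < t} (1 - λ b i)` times its
value at `T`. Since `1 - x ≤ e^{-x}`, that product is at most `exp (-λ ∑_{T ≤ i < t} b i)`,
which tends to `0` because `∑ b` diverges. Hence `|z t| < 2η` eventually, for every `η > 0`.
-/

theorem prod_Ico_one_sub_le_exp_neg_sum {a : ℕ → ℝ} (ha : ∀ i, a i ≤ 1) (m n : ℕ) :
    ∏ i ∈ Ico m n, (1 - a i) ≤ Real.exp (-∑ i ∈ Ico m n, a i) := by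
  rw [← sum_neg_distrib, Real.exp_sum]
  exact prod_le_prod (fun i _ => sub_nonneg.2 (ha i)) fun i _ => Real.one_sub_le_exp_neg (a i)

theorem tendsto_prod_Ico_one_sub_zero {a : ℕ → ℝ} (ha : ∀ i, a i ≤ 1)
    (hdiv : Tendsto (fun n => ∑ i ∈ range n, a i) atTop atTop) (m : ℕ) :
    Tendsto (fun n => ∏ i ∈ Ico m n, (1 - a i)) atTop (nhds 0) := by
  have htail : Tendsto (fun n => ∑ i ∈ Ico m n, a i) atTop atTop := by
    refine (tendsto_atTop_add_const_right _ (-∑ i ∈ range m, a i) hdiv).congr' ?_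
    filter_upwards [eventually_ge_atTop m] with n hn
    rw [sum_Ico_eq_sub _ hn, sub_eq_add_neg]
  refine squeeze_zero (fun n => prod_nonneg fun i _ => sub_nonneg.2 (ha i))
    (prod_Ico_one_sub_le_exp_neg_sum ha m) ?_
  exact Real.tendsto_exp_atBot.comp (tendsto_neg_atTop_atBot.comp htail)

theorem le_prod_Ico_mul_of_succ_le_mul {u c : ℕ → ℝ} {m : ℕ} (hc : ∀ t ≥ m, 0 ≤ c t)
    (h : ∀ t ≥ m, u (t + 1) ≤ c t * u t) :
    ∀ n ≥ m, u n ≤ (∏ i ∈ Ico m n, c i) * u m := by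
  intro n hn
  induction n, hn using Nat.le_induction with
  | base => simp
  | succ n hn ih =>
    calc u (n + 1) ≤ c n * u n := h n hn
      _ ≤ c n * ((∏ i ∈ Ico m n, c i) * u m) := mul_le_mul_of_nonneg_left ih (hc n hn)
      _ = (∏ i ∈ Ico m (n + 1), c i) * u m := by rw [prod_Ico_succ_top hn]; ring

theorem abs_one_sub_mul_add_mul_sub_le {lam b x e η : ℝ} (hc : 0 ≤ 1 - lam * b) (hb : 0 ≤ b)
    (he : |e| ≤ lam * η) : |(1 - lam * b) * x + b * e| - η ≤ (1 - lam * b) * (|x| - η) := by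
  have hbe : |b * e| ≤ b * (lam * η) := by
    rw [abs_mul, abs_of_nonneg hb]; exact mul_le_mul_of_nonneg_left he hb
  have hcx : |(1 - lam * b) * x| = (1 - lam * b) * |x| := by rw [abs_mul, abs_of_nonneg hc]
  linarith [abs_add_le ((1 - lam * b) * x) (b * e)]

/-- **Lemma (convergence of a perturbed contraction).** Let `0 < λ ≤ 1`, let
`b t ∈ [0,1]` with `∑ b t = ∞`, and let `ε t → 0`.  Then the sequence defined by
`z (t+1) = (1 - λ b t) z t + b t ε (t+1)` converges to `0`. -/
theorem stmt_13 (lam : ℝ) (hlam0 : 0 < lam) (hlam1 : lam ≤ 1)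
    (b eps z : ℕ → ℝ)
    (hb : ∀ t, b t ∈ Set.Icc (0 : ℝ) 1)
    (hbsum : Tendsto (fun n => ∑ t ∈ Finset.range n, b t) atTop atTop)
    (heps : Tendsto eps atTop (nhds 0))
    (hz : ∀ t, z (t + 1) = (1 - lam * b t) * z t + b t * eps (t + 1)) :
    Tendsto z atTop (nhds 0) := by
  have hlamb_le_one : ∀ t, lam * b t ≤ 1 := fun t => mul_le_one₀ hlam1 (hb t).1 (hb t).2
  have hdiv : Tendsto (fun n => ∑ t ∈ range n, lam * b t) atTop atTop := by
    simpa only [← mul_sum] using hbsum.const_mul_atTop hlam0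
  refine Metric.tendsto_nhds.2 fun δ hδ => ?_
  obtain ⟨T, hT⟩ :=
    eventually_atTop.1 <| Metric.tendsto_nhds.1 heps (lam * (δ / 2)) (by positivity)
  have hcontract : ∀ t ≥ T, |z (t + 1)| - δ / 2 ≤ (1 - lam * b t) * (|z t| - δ / 2) :=
    fun t ht => hz t ▸ abs_one_sub_mul_add_mul_sub_le (sub_nonneg.2 (hlamb_le_one t)) (hb t).1
      (by simpa using (hT (t + 1) (by omega)).le)
  have hbound := le_prod_Ico_mul_of_succ_le_mul (u := fun t => |z t| - δ / 2)
    (fun t _ => sub_nonneg.2 (hlamb_le_one t)) hcontract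
  have hlim : Tendsto (fun n => δ / 2 + (∏ i ∈ Ico T n, (1 - lam * b i)) * (|z T| - δ / 2))
      atTop (nhds (δ / 2)) := by
    simpa using ((tendsto_prod_Ico_one_sub_zero hlamb_le_one hdiv T).mul_const _).const_add (δ / 2)
  filter_upwards [eventually_ge_atTop T, hlim.eventually (gt_mem_nhds (half_lt_self hδ))]
    with n hn hlt
  rw [Real.dist_eq, sub_zero]
  linarith [hbound n hn]
end

section
/- Let R be a random variable with 0 ≤ R ≤ M almost surely for a constant M > 0, let G be a sub-σ-algebra, and let S := E[R | G]. Then for every t with 0 ≤ t and t + 1 < M, one has P(S > t + 1) ≤ (M − t)·P(R > t). In particular, if M = aN for a constant a > 0, P(R > t) ≤ O(N^{−c₁}) for some c₁ > 1 and t = O(√ω), then P(S > t + 1) = o(1). -/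
open MeasureTheory ProbabilityTheory Filter Asymptotics

/-!
Since `R ≤ M`, pointwise `R ≤ t + (M - t) · 1{t < R}`; conditioning on `G` gives
`S ≤ t + (M - t) · P(t < R | G)`. On `{t + 1 < S}` the nonnegative variable
`(M - t) · P(t < R | G)` is therefore at least `1`, and Markov's inequality bounds this event by
its mean `(M - t) · P(t < R)`. With `M = aN` and `P(t < R) ≤ C N^{-c₁}` the bound is
`O(N^{1 - c₁}) → 0`.
-/

namespace MeasureTheory

variable {Ω : Type*} {m m₀ : MeasurableSpace Ω} {μ : Measure Ω}

theorem mul_meas_ge_condExp_le_integral_of_nonneg [IsFiniteMeasure μ] (hm : m ≤ m₀) {f : Ω → ℝ}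
    (hf_nonneg : 0 ≤ᵐ[μ] f) (ε : ℝ) :
    ε * μ.real {ω | ε ≤ μ[f | m] ω} ≤ ∫ ω, f ω ∂μ := by
  rw [← integral_condExp hm]
  exact mul_meas_ge_le_integral_of_nonneg (condExp_nonneg hf_nonneg) integrable_condExp ε

theorem le_add_indicator_lt {R : Ω → ℝ} {M t : ℝ} {ω : Ω} (hRM : R ω ≤ M) :
    R ω ≤ t + {ω | t < R ω}.indicator (fun _ => M - t) ω := by
  by_cases h : t < R ω
  · simp only [Set.indicator_of_mem (show ω ∈ {ω | t < R ω} from h)]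
    linarith
  · simp only [Set.indicator_of_notMem (show ω ∉ {ω | t < R ω} from h)]
    linarith

theorem condExp_le_add_condExp_indicator_lt [IsFiniteMeasure μ] (hm : m ≤ m₀) {R : Ω → ℝ}
    (hR : Measurable R) (hR_int : Integrable R μ) {M : ℝ} (hRM : ∀ᵐ ω ∂μ, R ω ≤ M) (t : ℝ) :
    μ[R | m] ≤ᵐ[μ] fun ω => t + μ[{ω | t < R ω}.indicator (fun _ => M - t) | m] ω := by
  have h_ind_int : Integrable ({ω | t < R ω}.indicator fun _ => M - t) μ :=
    (integrable_const _).indicator (hR measurableSet_Ioi)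
  have h_mono : μ[R | m] ≤ᵐ[μ] μ[(fun _ => t) + {ω | t < R ω}.indicator (fun _ => M - t) | m] :=
    condExp_mono hR_int ((integrable_const t).add h_ind_int)
      (hRM.mono fun ω hω => le_add_indicator_lt hω)
  filter_upwards [h_mono, condExp_add (integrable_const t) h_ind_int m] with ω h_le h_add
  rwa [h_add, Pi.add_apply, condExp_const hm] at h_le

theorem measure_lt_condExp_le_of_le [IsFiniteMeasure μ] (hm : m ≤ m₀) {R : Ω → ℝ}
    (hR : Measurable R) (hR_int : Integrable R μ) {M t : ℝ} (hRM : ∀ᵐ ω ∂μ, R ω ≤ M)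
    (htM : t ≤ M) :
    μ {ω | t + 1 < μ[R | m] ω} ≤ ENNReal.ofReal (M - t) * μ {ω | t < R ω} := by
  have hA : MeasurableSet {ω | t < R ω} := measurableSet_lt measurable_const hR
  set f := {ω | t < R ω}.indicator fun _ => M - t with hf
  have h_sub : μ {ω | t + 1 < μ[R | m] ω} ≤ μ {ω | 1 ≤ μ[f | m] ω} :=
    measure_mono_ae <| (condExp_le_add_condExp_indicator_lt hm hR hR_int hRM t).mono
      fun ω hω hlt => show 1 ≤ μ[f | m] ω by linarith [show t + 1 < _ from hlt]
  have h_markov : μ.real {ω | 1 ≤ μ[f | m] ω} ≤ (M - t) * μ.real {ω | t < R ω} := by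
    have := mul_meas_ge_condExp_le_integral_of_nonneg hm (f := f)
      (ae_of_all μ fun ω => Set.indicator_nonneg (fun _ _ => sub_nonneg.2 htM) ω) 1
    rwa [one_mul, hf, integral_indicator_const _ hA, smul_eq_mul, mul_comm] at this
  calc μ {ω | t + 1 < μ[R | m] ω} ≤ μ {ω | 1 ≤ μ[f | m] ω} := h_sub
    _ = ENNReal.ofReal (μ.real {ω | 1 ≤ μ[f | m] ω}) := (ofReal_measureReal).symm
    _ ≤ ENNReal.ofReal ((M - t) * μ.real {ω | t < R ω}) := ENNReal.ofReal_le_ofReal h_markov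
    _ = ENNReal.ofReal (M - t) * μ {ω | t < R ω} := by
      rw [ENNReal.ofReal_mul (sub_nonneg.2 htM), ofReal_measureReal]

theorem measure_lt_condExp_le [IsFiniteMeasure μ] (hm : m ≤ m₀) {R : Ω → ℝ}
    (hR : Measurable R) (hR_int : Integrable R μ) {M : ℝ} (hRM : ∀ᵐ ω ∂μ, R ω ≤ M) (t : ℝ) :
    μ {ω | t + 1 < μ[R | m] ω} ≤ ENNReal.ofReal (M - t) * μ {ω | t < R ω} := by
  rcases le_or_gt t M with htM | hMt
  · exact measure_lt_condExp_le_of_le hm hR hR_int hRM htM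
  · -- the case `t = M` of the bound already makes the larger set `{M + 1 < μ[R | m]}` null
    have h_null := measure_lt_condExp_le_of_le hm hR hR_int hRM le_rfl
    rw [sub_self, ENNReal.ofReal_zero, zero_mul, nonpos_iff_eq_zero] at h_null
    have h_null' : μ {ω | t + 1 < μ[R | m] ω} = 0 :=
      measure_mono_null (fun ω (hω : t + 1 < _) => show M + 1 < _ by linarith) h_null
    rw [h_null']
    exact zero_le

theorem measure_lt_condExp_le_of_ae_mem_Icc [IsFiniteMeasure μ] (hm : m ≤ m₀) {R : Ω → ℝ}
    (hR : Measurable R) {L M : ℝ} (hR_mem : ∀ᵐ ω ∂μ, R ω ∈ Set.Icc L M) (t : ℝ) :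
    μ {ω | t + 1 < μ[R | m] ω} ≤ ENNReal.ofReal (M - t) * μ {ω | t < R ω} :=
  measure_lt_condExp_le hm hR (.of_mem_Icc L M hR.aemeasurable hR_mem)
    (hR_mem.mono fun _ h => h.2) t

end MeasureTheory

theorem tendsto_natCast_mul_rpow_neg_atTop {c : ℝ} (hc : 1 < c) :
    Tendsto (fun N : ℕ => (N : ℝ) * (N : ℝ) ^ (-c)) atTop (nhds 0) := by
  have h_pow : Tendsto (fun N : ℕ => (N : ℝ) ^ (-(c - 1))) atTop (nhds 0) :=
    (tendsto_rpow_neg_atTop (sub_pos.2 hc)).comp tendsto_natCast_atTop_atTop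
  refine h_pow.congr' ((eventually_ne_atTop 0).mono fun N hN => ?_)
  rw [neg_sub, sub_eq_neg_add, Real.rpow_add_one (Nat.cast_ne_zero.2 hN), mul_comm]

/-- **Markov-type bound for a conditional expectation, and its asymptotic consequence.**
(1) If `0 ≤ R ≤ M` a.s. and `S := E[R | G]`, then for `0 ≤ t` with `t + 1 < M`,
`P(S > t+1) ≤ (M - t) P(R > t)`.
(2) In particular, for a sequence of probability spaces, if `M = aN` for a constant
`a > 0`, `P(R_N > t_N) ≤ O(N^{-c₁})` for some `c₁ > 1`, and `t_N = O(√ω_N)`, then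
`P(S_N > t_N + 1) = o(1)`. -/
theorem stmt_16 :
    (∀ (Ω : Type) (_m : MeasurableSpace Ω) (P : Measure Ω), IsProbabilityMeasure P →
      ∀ (M : ℝ), 0 < M → ∀ (R : Ω → ℝ), Measurable R →
      (∀ᵐ ω ∂P, R ω ∈ Set.Icc (0 : ℝ) M) →
      ∀ (G : MeasurableSpace Ω), G ≤ _m →
      ∀ (t : ℝ), 0 ≤ t → t + 1 < M →
      P {ω | t + 1 < (P[R | G]) ω} ≤ ENNReal.ofReal (M - t) * P {ω | t < R ω})
    ∧
    (∀ (Ω : ℕ → Type) (_m : ∀ N, MeasurableSpace (Ω N)) (P : ∀ N, Measure (Ω N)),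
      (∀ N, IsProbabilityMeasure (P N)) →
      ∀ (a : ℝ), 0 < a → ∀ (c₁ : ℝ), 1 < c₁ →
      ∀ (R : ∀ N, Ω N → ℝ) (G : ∀ N, MeasurableSpace (Ω N)) (t w : ℕ → ℝ),
      (∀ N, Measurable (R N)) →
      (∀ N, G N ≤ _m N) →
      (∀ N : ℕ, ∀ᵐ ω ∂(P N), R N ω ∈ Set.Icc (0 : ℝ) (a * N)) →
      (∀ N, 0 ≤ t N) →
      (fun N => t N) =O[atTop] (fun N => Real.sqrt (w N)) →
      (∃ Cp : ℝ, ∀ N : ℕ, 0 < N →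
        ((P N) {ω | t N < R N ω}).toReal ≤ Cp * (N : ℝ) ^ (-c₁)) →
      Tendsto (fun N => (P N) {ω | t N + 1 < ((P N)[R N | G N]) ω}) atTop (nhds 0)) := by
  refine ⟨fun Ω _m P _ M _ R hR hR_bd G hG t _ _ => ?_,
    fun Ω _m P _ a ha c₁ hc₁ R G t w hR hG hR_bd ht _ ⟨Cp, hCp⟩ => ?_⟩
  · exact measure_lt_condExp_le_of_ae_mem_Icc hG hR hR_bd t
  · -- the instance found for `Measurable (R N)` in the statement is `G N`, not `_m N`
    have hR' : ∀ N, Measurable[_m N] (R N) := fun N => (hR N).mono (hG N) le_rfl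
    have h_bound : ∀ N, 0 < N → (P N) {ω | t N + 1 < (P N)[R N | G N] ω} ≤
        ENNReal.ofReal (a * Cp * ((N : ℝ) * (N : ℝ) ^ (-c₁))) := fun N hN =>
      calc (P N) {ω | t N + 1 < (P N)[R N | G N] ω}
          ≤ ENNReal.ofReal (a * N - t N) * (P N) {ω | t N < R N ω} :=
            measure_lt_condExp_le_of_ae_mem_Icc (hG N) (hR' N) (hR_bd N) (t N)
        _ ≤ ENNReal.ofReal (a * N) * ENNReal.ofReal (Cp * (N : ℝ) ^ (-c₁)) :=
            mul_le_mul' (ENNReal.ofReal_le_ofReal (by linarith [ht N]))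
              ((ENNReal.ofReal_toReal (measure_ne_top _ _)).symm.trans_le
                (ENNReal.ofReal_le_ofReal (hCp N hN)))
        _ = ENNReal.ofReal (a * Cp * ((N : ℝ) * (N : ℝ) ^ (-c₁))) := by
            rw [← ENNReal.ofReal_mul (by positivity)]
            ring_nf
    have h_lim : Tendsto (fun N : ℕ => ENNReal.ofReal (a * Cp * ((N : ℝ) * (N : ℝ) ^ (-c₁))))
        atTop (nhds 0) := by
      simpa using ENNReal.tendsto_ofReal ((tendsto_natCast_mul_rpow_neg_atTop hc₁).const_mul (a * Cp))
    exact tendsto_of_tendsto_of_tendsto_of_le_of_le' tendsto_const_nhds h_lim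
      (.of_forall fun _ => zero_le) ((eventually_gt_atTop 0).mono h_bound)
end
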